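/- arXiv:2504.13286 — 4 statements merged into one kernel-verified Lean document; each statement's English description precedes it below -/
import Mathlib

section
/- Let A_K be an n×n real matrix and let S_t = {x ∈ ℝⁿ : F A_K^k x ≤ g for all 0 ≤ k ≤ t} for a matrix F and vector g ≥ 0. Then each S_t is a convex set containing 0, the sequence is nested (S_{t+1} ⊆ S_t), and if S_{t*+1} = S_{t*} for some t*, then S_t = S_{t*} for all t ≥ t* and S_{t*} is invariant under A_K (x ∈ S_{t*} implies A_K x ∈ S_{t*}). -/
open Matrix

/-- Properties of the intermediate sets `S_t = {x : F A_Kᵏ x ≤ g, 0 ≤ k ≤ t}` of the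
Gilbert–Tan algorithm: each `S_t` is convex and contains `0`, the sequence is nested,
and if `S_{t*+1} = S_{t*}` then the sequence is constant from `t*` on and `S_{t*}` is
invariant under `A_K`. -/
theorem gilbert_tan_sets {n s : ℕ}
    (AK : Matrix (Fin n) (Fin n) ℝ) (F : Matrix (Fin s) (Fin n) ℝ)
    (g : Fin s → ℝ) (hg : ∀ i, 0 ≤ g i)
    (S : ℕ → Set (Fin n → ℝ))
    (hS : ∀ t, S t = {x | ∀ k ≤ t, ∀ i, (F.mulVec ((AK ^ k).mulVec x)) i ≤ g i}) :
    (∀ t, Convex ℝ (S t) ∧ (0 : Fin n → ℝ) ∈ S t) ∧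
    (∀ t, S (t + 1) ⊆ S t) ∧
    (∀ tstar, S (tstar + 1) = S tstar →
      (∀ t, tstar ≤ t → S t = S tstar) ∧ ∀ x ∈ S tstar, AK.mulVec x ∈ S tstar) := by
  refine ⟨?_, ?_, ?_⟩
  · intro t
    constructor
    · intro x hx y hy a b ha hb hab
      rw [hS] at hx hy ⊢
      intro k hk i
      have hx' := hx k hk i
      have hy' := hy k hk i
      have : (F.mulVec ((AK ^ k).mulVec (a • x + b • y))) i
          = a * (F.mulVec ((AK ^ k).mulVec x)) i + b * (F.mulVec ((AK ^ k).mulVec y)) i := by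
        simp [Matrix.mulVec_add, Matrix.mulVec_smul]
      rw [this]
      calc a * (F.mulVec ((AK ^ k).mulVec x)) i + b * (F.mulVec ((AK ^ k).mulVec y)) i
          ≤ a * g i + b * g i := by
            gcongr <;> assumption
        _ = g i := by rw [← add_mul, hab, one_mul]
    · rw [hS]
      intro k hk i
      simp [Matrix.mulVec_zero, hg i]
  · intro t x hx
    rw [hS] at hx ⊢
    intro k hk i
    exact hx k (hk.trans (Nat.le_succ t)) i
  · intro tstar hfix
    -- invariance first
    have hinv : ∀ x ∈ S tstar, AK.mulVec x ∈ S tstar := by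
      intro x hx
      rw [← hfix] at hx
      rw [hS] at hx ⊢
      intro k hk i
      have := hx (k + 1) (by omega) i
      rw [pow_succ] at this
      simpa [Matrix.mulVec_mulVec] using this
    have hpow : ∀ x ∈ S tstar, ∀ m : ℕ, (AK ^ m).mulVec x ∈ S tstar := by
      intro x hx m
      induction m with
      | zero => simpa using hx
      | succ m ih =>
        have := hinv _ ih
        rwa [Matrix.mulVec_mulVec, ← pow_succ'] at this
    refine ⟨?_, hinv⟩
    intro t ht
    apply Set.Subset.antisymm
    · intro x hx
      rw [hS] at hx ⊢
      intro k hk i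
      exact hx k (hk.trans ht) i
    · intro x hx
      have hall : ∀ k : ℕ, ∀ i, (F.mulVec ((AK ^ k).mulVec x)) i ≤ g i := by
        intro k i
        have := hpow x hx k
        rw [hS] at this
        have := this 0 (Nat.zero_le _) i
        simpa using this
      rw [hS]
      intro k _ i
      exact hall k i
end

section
/- If A_K is an n×n real matrix with spectral radius strictly less than 1, and F, g define a polyhedron {y : F y ≤ g} with g having all strictly positive components, then there exists t* such that for all x with F A_K^k x ≤ g for 0 ≤ k ≤ t*, one also has F A_K^{t*+1} x ≤ g; i.e., the maximal output admissible set is finitely determined, provided the sets S_t are bounded. -/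
open Matrix Filter

attribute [local instance] Matrix.linftyOpSeminormedAddCommGroup
  Matrix.linftyOpNormedRing Matrix.linftyOpNormedAlgebra

/-- The `L∞-L1` operator norm is unchanged by entrywise `algebraMap ℝ ℂ`. -/
private lemma nnnorm_map_algebraMap {m k : ℕ} (A : Matrix (Fin m) (Fin k) ℝ) :
    ‖A.map (algebraMap ℝ ℂ)‖₊ = ‖A‖₊ := by
  simp only [Matrix.linfty_opNNNorm_def, Matrix.map_apply]
  congr 1
  ext i
  congr 1
  apply Finset.sum_congr rfl
  intro j _
  simp [Complex.nnnorm_real]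

private lemma map_pow_algebraMap {m : ℕ} (A : Matrix (Fin m) (Fin m) ℝ) (k : ℕ) :
    (A.map (algebraMap ℝ ℂ)) ^ k = (A ^ k).map (algebraMap ℝ ℂ) := by
  have := map_pow ((algebraMap ℝ ℂ).mapMatrix (m := Fin m)) A k
  simpa [RingHom.mapMatrix_apply] using this.symm

/-- Gilbert–Tan finite determination: if `A_K` has spectral radius `< 1`, `g > 0`
componentwise, and `S_0 = {x : F x ≤ g}` is bounded, then there exists `t*` such that
every `x` satisfying the constraints `F A_Kᵏ x ≤ g` for `0 ≤ k ≤ t*` also satisfies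
them at step `t* + 1`. -/
theorem gilbert_tan_finite_determination {n s : ℕ}
    (AK : Matrix (Fin n) (Fin n) ℝ) (F : Matrix (Fin s) (Fin n) ℝ)
    (g : Fin s → ℝ) (hg : ∀ i, 0 < g i)
    (hspec : ∀ μ : ℂ, μ ∈ spectrum ℂ (AK.map (algebraMap ℝ ℂ)) → ‖μ‖ < 1)
    (hbdd : Bornology.IsBounded {x : Fin n → ℝ | ∀ i, (F.mulVec x) i ≤ g i}) :
    ∃ tstar : ℕ, ∀ x : Fin n → ℝ,
      (∀ k ≤ tstar, ∀ i, (F.mulVec ((AK ^ k).mulVec x)) i ≤ g i) →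
      ∀ i, (F.mulVec ((AK ^ (tstar + 1)).mulVec x)) i ≤ g i := by
  -- trivial cases
  rcases Nat.eq_zero_or_pos n with hn | hn
  · subst hn
    refine ⟨0, fun x _ i => ?_⟩
    have : (F.mulVec ((AK ^ 1).mulVec x)) i = 0 := by
      simp [Matrix.mulVec, dotProduct]
    rw [this]; exact (hg i).le
  rcases Nat.eq_zero_or_pos s with hs | hs
  · subst hs
    exact ⟨0, fun x _ i => i.elim0⟩
  haveI : Nonempty (Fin n) := ⟨⟨0, hn⟩⟩
  haveI : Nonempty (Fin s) := ⟨⟨0, hs⟩⟩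
  set B := AK.map (algebraMap ℝ ℂ) with hB
  -- spectral radius < 1
  have hρ : spectralRadius ℂ B < 1 := by
    have := spectrum.spectralRadius_lt_of_forall_lt (a := B) (r := 1) ?_
    · simpa using this
    · intro z hz
      have := hspec z hz
      rw [← NNReal.coe_lt_coe]
      simpa [coe_nnnorm] using this
  -- Gelfand formula
  have hgel := spectrum.pow_nnnorm_pow_one_div_tendsto_nhds_spectralRadius B
  obtain ⟨c, hc1, hc2⟩ := exists_between hρ
  have hc2' : c < ⊤ := lt_of_lt_of_le hc2 (by simp)
  -- eventually (‖B^k‖₊)^(1/k) < c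
  have hev : ∀ᶠ k : ℕ in atTop, (‖B ^ k‖₊ : ENNReal) ^ (1 / (k : ℝ)) < c :=
    hgel.eventually_lt_const hc1
  -- c as ℝ≥0
  lift c to NNReal using hc2'.ne with c' hc'
  have hclt1 : (c' : ℝ) < 1 := by exact_mod_cast hc2
  have hc0 : (0:ℝ) ≤ (c' : ℝ) := c'.coe_nonneg
  -- eventually ‖AK^k‖ ≤ c^k
  have hev2 : ∀ᶠ k : ℕ in atTop, ‖AK ^ k‖ ≤ (c' : ℝ) ^ k := by
    filter_upwards [hev, eventually_ge_atTop 1] with k hk hk1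
    have hk0 : (k : ℝ) ≠ 0 := by positivity
    have h1 : ((‖B ^ k‖₊ : ENNReal) ^ (1 / (k : ℝ))) ^ (k : ℝ) ≤ (c' : ENNReal) ^ (k : ℝ) :=
      ENNReal.rpow_le_rpow hk.le (by positivity)
    rw [← ENNReal.rpow_mul, one_div, inv_mul_cancel₀ hk0, ENNReal.rpow_one] at h1
    rw [ENNReal.rpow_natCast] at h1
    have h2 : ‖B ^ k‖₊ ≤ c' ^ k := by exact_mod_cast h1
    have h3 : ‖B ^ k‖ ≤ (c' : ℝ) ^ k := by exact_mod_cast h2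
    rwa [map_pow_algebraMap, ← coe_nnnorm, nnnorm_map_algebraMap, coe_nnnorm] at h3
  -- bound on the set S₀
  obtain ⟨R, hR⟩ := Bornology.IsBounded.exists_norm_le hbdd
  have hR0 : 0 ≤ R := by
    refine le_trans (norm_nonneg (0 : Fin n → ℝ)) (hR 0 ?_)
    intro i
    simpa [Matrix.mulVec_zero] using (hg i).le
  -- minimal component of g
  set gmin : ℝ := Finset.univ.inf' Finset.univ_nonempty g with hgmin
  have hgmin0 : 0 < gmin := by
    rw [hgmin]
    exact (Finset.lt_inf'_iff _).mpr fun i _ => hg i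
  have hgle : ∀ i, gmin ≤ g i := fun i =>
    Finset.inf'_le _ (Finset.mem_univ i)
  -- eventually the product is small
  have htend : Tendsto (fun k : ℕ => (c' : ℝ) ^ k * (‖F‖ * R)) atTop (nhds 0) := by
    have := tendsto_pow_atTop_nhds_zero_of_norm_lt_one
      (x := (c' : ℝ)) (by rwa [Real.norm_eq_abs, abs_of_nonneg hc0])
    simpa using this.mul_const (‖F‖ * R)
  have hev3 : ∀ᶠ k : ℕ in atTop, (c' : ℝ) ^ k * (‖F‖ * R) < gmin :=
    htend.eventually_lt_const hgmin0
  obtain ⟨k, hk1, hkn, hks⟩ := (eventually_ge_atTop 1).and (hev2.and hev3) |>.exists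
  refine ⟨k - 1, fun x hx i => ?_⟩
  have hkk : k - 1 + 1 = k := Nat.succ_pred_eq_of_pos hk1
  rw [hkk]
  -- x ∈ S₀
  have hxS : ‖x‖ ≤ R := by
    refine hR x fun i => ?_
    have := hx 0 (Nat.zero_le _) i
    simpa using this
  -- norm chain
  have h1 : (F.mulVec ((AK ^ k).mulVec x)) i ≤ ‖F.mulVec ((AK ^ k).mulVec x)‖ :=
    le_trans (le_abs_self _)
      (by simpa [Real.norm_eq_abs] using norm_le_pi_norm (F.mulVec ((AK ^ k).mulVec x)) i)
  have h2 : ‖F.mulVec ((AK ^ k).mulVec x)‖ ≤ ‖F‖ * ‖(AK ^ k).mulVec x‖ :=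
    Matrix.linfty_opNorm_mulVec _ _
  have h3 : ‖(AK ^ k).mulVec x‖ ≤ ‖AK ^ k‖ * ‖x‖ :=
    Matrix.linfty_opNorm_mulVec _ _
  have h4 : ‖F‖ * ‖(AK ^ k).mulVec x‖ ≤ ‖F‖ * (((c' : ℝ) ^ k) * R) := by
    refine mul_le_mul_of_nonneg_left ?_ (norm_nonneg _)
    calc ‖(AK ^ k).mulVec x‖ ≤ ‖AK ^ k‖ * ‖x‖ := h3
    _ ≤ ((c' : ℝ) ^ k) * R :=
      mul_le_mul hkn hxS (norm_nonneg _) (by positivity)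
  have h5 : (F.mulVec ((AK ^ k).mulVec x)) i ≤ (c' : ℝ) ^ k * (‖F‖ * R) := by
    calc (F.mulVec ((AK ^ k).mulVec x)) i ≤ ‖F‖ * (((c' : ℝ) ^ k) * R) :=
      le_trans h1 (le_trans h2 h4)
    _ = (c' : ℝ) ^ k * (‖F‖ * R) := by ring
  exact le_trans h5 (le_trans hks.le (hgle i))
end

section
/- By the Hautus test: if (Φ, C) is detectable and rank [[I - Φ, -Γ_d],[C, C_d]] = n + n_d, then the augmented pair (Φ̃, C̃) with Φ̃ = [[Φ, Γ_d],[0, I_{n_d}]] and C̃ = [C, C_d] is detectable. -/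
open Matrix

private lemma rank_eq_card_iff_ker {m n K : Type*} [Fintype n] [Field K]
    (A : Matrix m n K) :
    A.rank = Fintype.card n ↔ LinearMap.ker A.mulVecLin = ⊥ := by
  have h := LinearMap.finrank_range_add_finrank_ker A.mulVecLin
  have hd : Module.finrank K (n → K) = Fintype.card n := Module.finrank_pi K
  rw [hd] at h
  rw [Matrix.rank]
  constructor
  · intro hr
    have hz : Module.finrank K (LinearMap.ker A.mulVecLin) = 0 := by omega
    exact Submodule.finrank_eq_zero.mp hz
  · intro hk
    rw [hk] at h
    simp only [finrank_bot, add_zero] at h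
    exact h

private lemma ker_map_complex {m n : Type*} [Fintype n] (A : Matrix m n ℝ)
    (h : ∀ x : n → ℝ, A *ᵥ x = 0 → x = 0) (v : n → ℂ)
    (hv : (A.map (algebraMap ℝ ℂ)) *ᵥ v = 0) : v = 0 := by
  have hre : A *ᵥ (fun j => (v j).re) = 0 := by
    funext i
    have := congrFun hv i
    simp only [mulVec, dotProduct, Matrix.map_apply] at this ⊢
    have : (∑ j, (algebraMap ℝ ℂ) (A i j) * v j).re = 0 := by
      rw [this]; rfl
    rw [Complex.re_sum] at this
    simpa [Complex.mul_re] using this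
  have him : A *ᵥ (fun j => (v j).im) = 0 := by
    funext i
    have := congrFun hv i
    simp only [mulVec, dotProduct, Matrix.map_apply] at this ⊢
    have : (∑ j, (algebraMap ℝ ℂ) (A i j) * v j).im = 0 := by
      rw [this]; rfl
    rw [Complex.im_sum] at this
    simpa [Complex.mul_im] using this
  have h1 := h _ hre
  have h2 := h _ him
  funext j
  have e1 := congrFun h1 j
  have e2 := congrFun h2 j
  simp only [Pi.zero_apply] at e1 e2 ⊢
  exact Complex.ext e1 e2

/-- Sufficiency via the Hautus test: if `(Φ, C)` is detectable and
`rank [[I - Φ, -Γ_d],[C, C_d]] = n + n_d`, then the augmented pair `(Φ̃, C̃)` with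
`Φ̃ = [[Φ, Γ_d],[0, I]]`, `C̃ = [C, C_d]` is detectable. -/
theorem augmented_detectability {n nd p : ℕ}
    (Φ : Matrix (Fin n) (Fin n) ℝ) (Γd : Matrix (Fin n) (Fin nd) ℝ)
    (C : Matrix (Fin p) (Fin n) ℝ) (Cd : Matrix (Fin p) (Fin nd) ℝ)
    (Φt : Matrix (Fin n ⊕ Fin nd) (Fin n ⊕ Fin nd) ℝ)
    (Ct : Matrix (Fin p) (Fin n ⊕ Fin nd) ℝ)
    (hΦt : Φt = fromBlocks Φ Γd 0 1)
    (hCt : Ct = fromCols C Cd)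
    (hdet : ∀ μ : ℂ, μ ∈ spectrum ℂ (Φ.map (algebraMap ℝ ℂ)) → 1 ≤ ‖μ‖ →
      (fromRows (μ • (1 : Matrix (Fin n) (Fin n) ℂ) - Φ.map (algebraMap ℝ ℂ))
        (C.map (algebraMap ℝ ℂ))).rank = n)
    (hrank : (fromBlocks (1 - Φ) (-Γd) C Cd).rank = n + nd) :
    ∀ μ : ℂ, μ ∈ spectrum ℂ (Φt.map (algebraMap ℝ ℂ)) → 1 ≤ ‖μ‖ →
      (fromRows (μ • (1 : Matrix (Fin n ⊕ Fin nd) (Fin n ⊕ Fin nd) ℂ) -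
          Φt.map (algebraMap ℝ ℂ)) (Ct.map (algebraMap ℝ ℂ))).rank = n + nd := by
  intro μ _hspec hμ
  set f := algebraMap ℝ ℂ
  have hcard : Fintype.card (Fin n ⊕ Fin nd) = n + nd := by simp
  rw [← hcard, rank_eq_card_iff_ker, Matrix.ker_mulVecLin_eq_bot_iff]
  intro v hv
  -- decompose v
  set x : Fin n → ℂ := v ∘ Sum.inl with hx
  set d : Fin nd → ℂ := v ∘ Sum.inr with hd
  have hvelim : v = Sum.elim x d := by
    funext i; cases i <;> rfl
  -- rewrite the matrix
  have hΦtmap : Φt.map f = fromBlocks (Φ.map f) (Γd.map f) 0 1 := by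
    rw [hΦt, Matrix.fromBlocks_map, Matrix.map_zero _ (map_zero f),
      Matrix.map_one _ (map_zero f) (map_one f)]
  have hCtmap : Ct.map f = fromCols (C.map f) (Cd.map f) := by
    rw [hCt]; funext i j; cases j <;> rfl
  rw [hΦtmap, hCtmap] at hv
  have hone : (1 : Matrix (Fin n ⊕ Fin nd) (Fin n ⊕ Fin nd) ℂ) =
      fromBlocks 1 0 0 1 := (fromBlocks_one).symm
  have hblock : μ • (1 : Matrix (Fin n ⊕ Fin nd) (Fin n ⊕ Fin nd) ℂ) -
      fromBlocks (Φ.map f) (Γd.map f) 0 1 =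
      fromBlocks (μ • 1 - Φ.map f) (-(Γd.map f)) 0 (μ • 1 - 1) := by
    rw [hone, fromBlocks_smul]
    funext i j
    cases i <;> cases j <;> simp [fromBlocks]
  rw [hblock, hvelim] at hv
  rw [fromRows_mulVec, fromBlocks_mulVec, fromCols_mulVec_sumElim] at hv
  have e1 : (μ • 1 - Φ.map f) *ᵥ x + (-(Γd.map f)) *ᵥ d = 0 :=
    funext fun i => congrFun hv (Sum.inl (Sum.inl i))
  have e2 : (0 : Matrix (Fin nd) (Fin n) ℂ) *ᵥ x + (μ • 1 - 1) *ᵥ d = 0 :=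
    funext fun i => congrFun hv (Sum.inl (Sum.inr i))
  have e3 : (C.map f) *ᵥ x + (Cd.map f) *ᵥ d = 0 :=
    funext fun i => congrFun hv (Sum.inr i)
  have e2' : (μ - 1) • d = 0 := by
    rw [zero_mulVec, zero_add, sub_mulVec, smul_mulVec, one_mulVec] at e2
    rw [sub_smul, one_smul]
    exact e2
  rw [hvelim]
  by_cases hμ1 : μ = 1
  · -- μ = 1 : use the rank hypothesis on the full block matrix
    have hrker : ∀ y : (Fin n ⊕ Fin nd) → ℝ,
        (fromBlocks (1 - Φ) (-Γd) C Cd) *ᵥ y = 0 → y = 0 := by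
      have := (rank_eq_card_iff_ker (fromBlocks (1 - Φ) (-Γd) C Cd)).mp
        (by rw [hrank, hcard])
      rw [Matrix.ker_mulVecLin_eq_bot_iff] at this
      exact this
    have hmapB : (fromBlocks (1 - Φ) (-Γd) C Cd).map f =
        fromBlocks (1 - Φ.map f) (-(Γd.map f)) (C.map f) (Cd.map f) := by
      funext i j
      cases i <;> cases j <;>
        simp [fromBlocks, Matrix.map_apply, Matrix.sub_apply, Matrix.neg_apply,
          Matrix.one_apply, apply_ite f]
    have hvz : ((fromBlocks (1 - Φ) (-Γd) C Cd).map f) *ᵥ (Sum.elim x d) = 0 := by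
      rw [hmapB, fromBlocks_mulVec]
      have e1' : (1 - Φ.map f) *ᵥ x + (-(Γd.map f)) *ᵥ d = 0 := by
        rw [hμ1, one_smul] at e1; exact e1
      funext i; cases i with
      | inl i => exact congrFun e1' i
      | inr i => exact congrFun e3 i
    exact ker_map_complex _ hrker _ hvz
  · -- μ ≠ 1 : d = 0 and Hautus on (Φ, C)
    have hdz : d = 0 := by
      rcases smul_eq_zero.mp e2' with h | h
      · exact absurd (sub_eq_zero.mp h) hμ1
      · exact h
    rw [hdz] at e1 e3
    rw [mulVec_zero, add_zero] at e1 e3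
    have hxz : x = 0 := by
      by_cases hsp : μ ∈ spectrum ℂ (Φ.map f)
      · have hr := hdet μ hsp hμ
        have hker : ∀ y : Fin n → ℂ,
            (fromRows (μ • (1 : Matrix (Fin n) (Fin n) ℂ) - Φ.map f) (C.map f)) *ᵥ y = 0 →
              y = 0 := by
          have := (rank_eq_card_iff_ker
            (fromRows (μ • (1 : Matrix (Fin n) (Fin n) ℂ) - Φ.map f) (C.map f))).mp
            (by rw [hr, Fintype.card_fin])
          rw [Matrix.ker_mulVecLin_eq_bot_iff] at this
          exact this
        apply hker
        rw [fromRows_mulVec]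
        funext i; cases i with
        | inl i => exact congrFun e1 i
        | inr i => exact congrFun e3 i
      · rw [spectrum.notMem_iff] at hsp
        rw [Algebra.algebraMap_eq_smul_one] at hsp
        obtain ⟨u, hu⟩ := hsp
        have h0 : ((↑u⁻¹ : Matrix (Fin n) (Fin n) ℂ) * (↑u : Matrix (Fin n) (Fin n) ℂ)) *ᵥ x = 0 := by
          rw [← Matrix.mulVec_mulVec, hu, e1, mulVec_zero]
        rwa [u.inv_mul, one_mulVec] at h0
    rw [hxz, hdz]
    funext i; cases i <;> rfl
end

section
/- Recursive feasibility: under the same control-invariance assumption on X_f (for every x ∈ X_f there exists u ∈ U with Φx + Γu ∈ X_f), if x ∈ X_N with optimal input sequence (u_0*,…,u_{N-1}*) and successor state x⁺ = Φx + Γu_0*, then x⁺ ∈ X_N, i.e., the feasible set X_N is positively invariant for the MPC closed loop. -/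
open Matrix

/-- Recursive feasibility: if the terminal set `X_f ⊆ X` is control invariant, `N ≥ 1`,
and `x ∈ X_N` with a feasible (e.g. optimal) input sequence `u`, then the successor
state `x⁺ = Φ x + Γ u_0` again lies in `X_N`. -/
theorem mpc_recursive_feasibility {n m : ℕ} {N : ℕ}
    (Φ : Matrix (Fin n) (Fin n) ℝ) (Γ : Matrix (Fin n) (Fin m) ℝ)
    (X Xf : Set (Fin n → ℝ)) (U : Set (Fin m → ℝ))
    (hXfX : Xf ⊆ X)
    (hctrlinv : ∀ x ∈ Xf, ∃ u ∈ U, Φ.mulVec x + Γ.mulVec u ∈ Xf)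
    (Feas : ℕ → Set (Fin n → ℝ))
    (hFeas : ∀ N x, x ∈ Feas N ↔ ∃ u : ℕ → Fin m → ℝ, ∃ xs : ℕ → Fin n → ℝ,
      xs 0 = x ∧
      (∀ k < N, u k ∈ U ∧ xs (k + 1) = Φ.mulVec (xs k) + Γ.mulVec (u k)) ∧
      (∀ k < N, xs k ∈ X) ∧ xs N ∈ Xf)
    (hN : 0 < N)
    (x : Fin n → ℝ) (u : ℕ → Fin m → ℝ) (xs : ℕ → Fin n → ℝ)
    (hx0 : xs 0 = x)
    (hfeas : (∀ k < N, u k ∈ U ∧ xs (k + 1) = Φ.mulVec (xs k) + Γ.mulVec (u k)) ∧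
      (∀ k < N, xs k ∈ X) ∧ xs N ∈ Xf) :
    Φ.mulVec x + Γ.mulVec (u 0) ∈ Feas N := by
  obtain ⟨hdyn, hX, hXfN⟩ := hfeas
  obtain ⟨ut, hutU, hut⟩ := hctrlinv (xs N) hXfN
  rw [hFeas]
  refine ⟨fun k => if k + 1 < N then u (k + 1) else ut,
    fun k => if k < N then xs (k + 1) else Φ.mulVec (xs N) + Γ.mulVec ut,
    ?_, ?_, ?_, ?_⟩
  · simp only [hN, if_pos]
    rw [(hdyn 0 hN).2, hx0]
  · intro k hk
    by_cases h : k + 1 < N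
    · simp only [hk, h, if_pos]
      exact ⟨(hdyn (k + 1) h).1, (hdyn (k + 1) h).2⟩
    · have hkN : k + 1 = N := le_antisymm hk (not_lt.mp h)
      simp only [if_neg h, if_pos hk]
      rw [hkN]
      exact ⟨hutU, rfl⟩
  · intro k hk
    simp only [if_pos hk]
    by_cases h : k + 1 < N
    · exact hX (k + 1) h
    · have : k + 1 = N := le_antisymm hk (not_lt.mp h)
      rw [this]; exact hXfX hXfN
  · simp only [lt_irrefl, if_false]
    exact hut
end
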